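/- Let Λ ⊆ Λ′ be an overlattice of nondegenerate integral lattices with H = Λ′/Λ ⊆ A_Λ. Then the orthogonal complement of H inside A_Λ (with respect to the discriminant bilinear form) equals Λ′*/Λ, and H^⊥/H is isomorphic to the discriminant group A_{Λ′} of Λ′. -/
import Mathlib


open Matrix

variable {n : ℕ}

/-- An overlattice of the standard lattice `Λ ⊆ ℚⁿ` (with respect to a bilinear form
`q`): a subgroup `L'` of `ℚⁿ` containing `Λ` on which `q` is integer-valued. -/
def IsOverlattice (q : (Fin n → ℚ) → (Fin n → ℚ) → ℚ)
    (Λ L' : AddSubgroup (Fin n → ℚ)) : Prop :=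
  Λ ≤ L' ∧ ∀ x ∈ L', ∀ y ∈ L', ∃ k : ℤ, q x y = (k : ℚ)

/-- The subgroup `H_{Λ'} = Λ'/Λ` of the discriminant group `A_Λ = Λ*/Λ`
associated to an overlattice `Λ'` of `Λ`. -/
def overlatticeToSubgroup (Λ dual L' : AddSubgroup (Fin n → ℚ)) :
    AddSubgroup (dual ⧸ Λ.addSubgroupOf dual) :=
  AddSubgroup.map (QuotientAddGroup.mk' (Λ.addSubgroupOf dual))
    (L'.addSubgroupOf dual)

/-- **Nikulin, Proposition 1.4.1, second part.** Let `Λ ⊆ Λ'` be an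
overlattice of nondegenerate integral lattices, `A_Λ = Λ*/Λ` the discriminant
group, and `H = Λ'/Λ ⊆ A_Λ`. Then the orthogonal complement `H^⊥` of `H` with
respect to the discriminant bilinear form equals `Λ'*/Λ`, and `H^⊥/H` is
isomorphic to the discriminant group `A_{Λ'} = Λ'*/Λ'` of `Λ'`. -/
theorem orthogonal_complement_of_overlattice_subgroup
    (G : Matrix (Fin n) (Fin n) ℤ) (hG : G.IsSymm) (hdet : G.det ≠ 0)
    (q : (Fin n → ℚ) → (Fin n → ℚ) → ℚ)
    (hq : ∀ x y, q x y = x ⬝ᵥ (G.map (Int.cast : ℤ → ℚ)).mulVec y)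
    (Λ dual : AddSubgroup (Fin n → ℚ))
    (hΛ : ∀ x, x ∈ Λ ↔ ∀ i, ∃ k : ℤ, x i = (k : ℚ))
    (hdual : ∀ x, x ∈ dual ↔ ∀ y ∈ Λ, ∃ k : ℤ, q x y = (k : ℚ))
    (hle : Λ ≤ dual)
    -- the overlattice `Λ'` and its dual lattice `Λ'*`
    (L' dual' : AddSubgroup (Fin n → ℚ)) (hover : IsOverlattice q Λ L')
    (hdual' : ∀ x, x ∈ dual' ↔ ∀ y ∈ L', ∃ k : ℤ, q x y = (k : ℚ))
    -- `H = Λ'/Λ ⊆ A_Λ` and its orthogonal complement `H^⊥` for the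
    -- discriminant bilinear form (i.e. `b_Λ(x,h) = 0` in `ℚ/ℤ` for all `h ∈ H`)
    (Hperp : AddSubgroup (dual ⧸ Λ.addSubgroupOf dual))
    (hHperp : ∀ x : dual,
      (QuotientAddGroup.mk' (Λ.addSubgroupOf dual) x ∈ Hperp ↔
        ∀ y : dual, QuotientAddGroup.mk' (Λ.addSubgroupOf dual) y ∈
            overlatticeToSubgroup Λ dual L' →
          ∃ k : ℤ, q (x : Fin n → ℚ) (y : Fin n → ℚ) = (k : ℚ))) :
    -- `H^⊥ = Λ'*/Λ` ...
    Hperp = AddSubgroup.map (QuotientAddGroup.mk' (Λ.addSubgroupOf dual))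
        (dual'.addSubgroupOf dual) ∧
    -- ... and `H^⊥/H ≅ A_{Λ'} = Λ'*/Λ'`
    Nonempty ((Hperp ⧸ (overlatticeToSubgroup Λ dual L').addSubgroupOf Hperp) ≃+
      (dual' ⧸ L'.addSubgroupOf dual')) := by
  classical
  have hsymm : ∀ x y, q x y = q y x := by
    intro x y
    have hGm : ((G.map (Int.cast : ℤ → ℚ)))ᵀ = G.map (Int.cast : ℤ → ℚ) := by
      rw [← Matrix.transpose_map, hG.eq]
    rw [hq, hq, Matrix.dotProduct_mulVec, ← Matrix.mulVec_transpose, hGm,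
      dotProduct_comm]
  have hL'dual : L' ≤ dual := fun x hx =>
    (hdual x).2 (fun y hy => hover.2 x hx y (hover.1 hy))
  have hΛdual' : Λ ≤ dual' := fun x hx => (hdual' x).2 (fun y hy => by
    obtain ⟨k, hk⟩ := hover.2 y hy x (hover.1 hx)
    exact ⟨k, by rw [hsymm]; exact hk⟩)
  have hdd : dual' ≤ dual := fun x hx =>
    (hdual x).2 (fun y hy => (hdual' x).1 hx y (hover.1 hy))
  set N := Λ.addSubgroupOf dual with hNdef
  have hmem : ∀ (S : AddSubgroup (Fin n → ℚ)), Λ ≤ S →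
      ∀ x : dual, QuotientAddGroup.mk' N x ∈
        AddSubgroup.map (QuotientAddGroup.mk' N) (S.addSubgroupOf dual) ↔
        (x : Fin n → ℚ) ∈ S := by
    intro S hΛS x
    constructor
    · rintro ⟨z, hz, hzx⟩
      rw [QuotientAddGroup.mk'_eq_mk'] at hzx
      obtain ⟨w, hw, hwz⟩ := hzx
      have hxzw : (x : Fin n → ℚ) = (z : Fin n → ℚ) + (w : Fin n → ℚ) := by
        rw [← hwz]; rfl
      rw [hxzw]
      exact S.add_mem (AddSubgroup.mem_addSubgroupOf.1 hz)
        (hΛS (AddSubgroup.mem_addSubgroupOf.1 hw))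
    · intro h
      exact ⟨x, AddSubgroup.mem_addSubgroupOf.2 h, rfl⟩
  have hB : ∀ x : dual, QuotientAddGroup.mk' N x ∈ Hperp ↔
      (x : Fin n → ℚ) ∈ dual' := by
    intro x
    rw [hHperp x, hdual' (x : Fin n → ℚ)]
    constructor
    · intro h y hy
      exact h ⟨y, hL'dual hy⟩ ((hmem L' hover.1 ⟨y, hL'dual hy⟩).2 hy)
    · intro h y hy
      exact h (y : Fin n → ℚ) ((hmem L' hover.1 y).1 hy)
  have hpart1 : Hperp = AddSubgroup.map (QuotientAddGroup.mk' N)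
      (dual'.addSubgroupOf dual) := by
    ext a
    refine QuotientAddGroup.induction_on a (fun x => ?_)
    exact (hB x).trans ((hmem dual' hΛdual' x).symm)
  refine ⟨hpart1, ?_⟩
  set H := overlatticeToSubgroup Λ dual L' with hHdef
  have hcod : ∀ x : dual', QuotientAddGroup.mk' N (AddSubgroup.inclusion hdd x) ∈ Hperp :=
    fun x => (hB _).2 x.2
  let f0 : dual' →+ Hperp :=
    AddMonoidHom.codRestrict ((QuotientAddGroup.mk' N).comp
      (AddSubgroup.inclusion hdd)) Hperp hcod
  let g : dual' →+ Hperp ⧸ H.addSubgroupOf Hperp :=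
    (QuotientAddGroup.mk' (H.addSubgroupOf Hperp)).comp f0
  have hker : ∀ x : dual', g x = 0 ↔ (x : Fin n → ℚ) ∈ L' := by
    intro x
    constructor
    · intro hgx
      have h1 : f0 x ∈ H.addSubgroupOf Hperp :=
        (QuotientAddGroup.eq_zero_iff (f0 x)).1 hgx
      exact (hmem L' hover.1 (AddSubgroup.inclusion hdd x)).1
        (AddSubgroup.mem_addSubgroupOf.1 h1)
    · intro hx
      exact (QuotientAddGroup.eq_zero_iff (f0 x)).2
        (AddSubgroup.mem_addSubgroupOf.2
          ((hmem L' hover.1 (AddSubgroup.inclusion hdd x)).2 hx))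
  let φ : (dual' ⧸ L'.addSubgroupOf dual') →+ Hperp ⧸ H.addSubgroupOf Hperp :=
    QuotientAddGroup.lift (L'.addSubgroupOf dual') g
      (fun x hx => (hker x).2 (AddSubgroup.mem_addSubgroupOf.1 hx))
  have hφbij : Function.Bijective φ := by
    constructor
    · refine (injective_iff_map_eq_zero φ).2 ?_
      intro a
      refine QuotientAddGroup.induction_on a (fun x ha => ?_)
      have hx : (x : Fin n → ℚ) ∈ L' := (hker x).1 ha
      exact (QuotientAddGroup.eq_zero_iff x).2 (AddSubgroup.mem_addSubgroupOf.2 hx)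
    · intro b
      refine QuotientAddGroup.induction_on b (fun w => ?_)
      obtain ⟨x, hx⟩ := QuotientAddGroup.mk'_surjective N ((w : dual ⧸ N))
      have hmemw : QuotientAddGroup.mk' N x ∈ Hperp := by rw [hx]; exact w.2
      have hxd : (x : Fin n → ℚ) ∈ dual' := (hB x).1 hmemw
      refine ⟨QuotientAddGroup.mk (⟨(x : Fin n → ℚ), hxd⟩ : dual'), ?_⟩
      have hfw : f0 ⟨(x : Fin n → ℚ), hxd⟩ = w := Subtype.ext hx
      exact congrArg (QuotientAddGroup.mk' (H.addSubgroupOf Hperp)) hfw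
  exact ⟨(AddEquiv.ofBijective φ hφbij).symm⟩
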